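/- Let A, B, B', C, C' be complex-valued multiplicative characters of a finite field F_q with q elements, let x, y ∈ F_q with x ≠ 1, and let t ∈ F_q with t ≠ 1. Then (1/(q-1))·Σ_θ {BC̄θ choose θ}·F₂(A;Bθ,B';C,C';x,y)·θ(t) = ε(t)·B̄(1-t)·F₂(A;B,B';C,C'; x/(1-t), y) - (B̄C)(-t)·ε(x)·Ā(1-x)·₂F₁(A,B';C' | y/(1-x)), where the sum on the left runs over all multiplicative characters θ of F_q. -/

import Mathlib

open Finset

noncomputable instance {F : Type*} [Field F] [Fintype F] : Fintype (MulChar F ℂ) :=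
  Fintype.ofFinite _

/-- Finite-field binomial coefficient `{A choose B} = B(-1) · J(A, B̄)`,
where `J(χ,λ) = ∑_u χ(u)·λ(1-u)` is the Jacobi sum. -/
noncomputable def binom {F : Type*} [Field F] [Fintype F] (A B : MulChar F ℂ) : ℂ :=
  B (-1) * ∑ u : F, A u * B⁻¹ (1 - u)

/-- Finite-field Gauss hypergeometric series
`₂F₁(A,B;C|x) = ε(x)·(BC)(-1)·∑_y B(y)·(B̄C)(1-y)·Ā(1-xy)`. -/
noncomputable def gauss2F1 {F : Type*} [Field F] [Fintype F]
    (A B C : MulChar F ℂ) (x : F) : ℂ :=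
  (1 : MulChar F ℂ) x * (B * C) (-1) *
    ∑ y : F, B y * (B⁻¹ * C) (1 - y) * A⁻¹ (1 - x * y)

/-- Finite-field `₃F₂` hypergeometric series. -/
noncomputable def hyper3F2 {F : Type*} [Field F] [Fintype F]
    (A₀ A₁ A₂ B₁ B₂ : MulChar F ℂ) (x : F) : ℂ :=
  ((Fintype.card F : ℂ) - 1)⁻¹ *
    ∑ χ : MulChar F ℂ,
      binom (A₀ * χ) χ * binom (A₁ * χ) (B₁ * χ) * binom (A₂ * χ) (B₂ * χ) * χ x

/-- Finite-field Appell series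
`F₂(A;B,B';C,C';x,y) = ε(xy)·(BB'CC')(-1)·∑_{u,v} B(u)B'(v)(B̄C)(1-u)(B̄'C')(1-v)·Ā(1-ux-vy)`. -/
noncomputable def appellF2 {F : Type*} [Field F] [Fintype F]
    (A B B' C C' : MulChar F ℂ) (x y : F) : ℂ :=
  (1 : MulChar F ℂ) (x * y) * (B * B' * C * C') (-1) *
    ∑ u : F, ∑ v : F,
      B u * B' v * (B⁻¹ * C) (1 - u) * (B'⁻¹ * C') (1 - v) * A⁻¹ (1 - u * x - v * y)

open scoped Classical in
/-- `δ(x) = 1` if `x = 0`, and `0` otherwise. -/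
noncomputable def deltaF {F : Type*} [Field F] (x : F) : ℂ :=
  if x = 0 then 1 else 0

open scoped Classical in
/-- `δ(χ) = 1` if `χ = ε` (the trivial character), and `0` otherwise. -/
noncomputable def deltaChar {F : Type*} [Field F] [Fintype F] (χ : MulChar F ℂ) : ℂ :=
  if χ = 1 then 1 else 0

/-!
Since `θ(-1) θ(u) θ̄(1 - u) θ(t) = θ(ut/(u - 1))`, exchanging the sums reduces the `θ`-sum to the
finite-field binomial theorem `(q - 1)⁻¹ ∑_θ {Dθ choose θ} θ(s) = ε(s) D̄(1 - s)` (with `D = BC̄`),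
which follows from orthogonality of characters. The resulting weight combines with
`B(u) (B̄C)(1 - u)`, and the substitution `u ↦ u/(1 - t)` turns the double sum into
`ε(t) B̄(1 - t) F₂(…; x/(1 - t), y)` minus the term at `u = 1 - t`; factoring
`Ā(1 - x - vy) = Ā(1 - x) Ā(1 - vy/(1 - x))` identifies that term with the `₂F₁`.
-/

theorem div_sub_one_mul_eq_one_iff {F : Type*} [Field F] {w s : F} (hs : s ≠ 0) :
    w / (w - 1) * s = 1 ↔ w * (1 - s) = 1 := by
  by_cases hw : w = 1
  · simp [hw, hs]
  · have : w - 1 ≠ 0 := sub_ne_zero.mpr hw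
    field_simp
    constructor <;> intro h <;> linear_combination -h

namespace MulChar

section Orthogonality

variable {M R : Type*} [CommMonoid M] [Finite M] [CommRing R] [IsDomain R]
  [HasEnoughRootsOfUnity R (Monoid.exponent Mˣ)] [Fintype (MulChar M R)]

theorem sum_apply_eq_zero_of_ne_one {a : M} (ha : a ≠ 1) : ∑ χ : MulChar M R, χ a = 0 := by
  obtain ⟨χ, hχ⟩ := exists_apply_ne_one_of_hasEnoughRootsOfUnity M R ha
  refine eq_zero_of_mul_eq_self_left hχ ?_
  simp only [Finset.mul_sum, ← MulChar.mul_apply]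
  exact Fintype.sum_bijective _ (Group.mulLeft_bijective χ) _ _ fun χ' ↦ rfl

theorem sum_apply_eq_ite [DecidableEq M] (a : M) :
    ∑ χ : MulChar M R, χ a = if a = 1 then (Nat.card Mˣ : R) else 0 := by
  split_ifs with ha
  · simp [ha, ← Nat.card_eq_fintype_card, card_eq_card_units_of_hasEnoughRootsOfUnity]
  · exact sum_apply_eq_zero_of_ne_one ha

end Orthogonality

variable {F R : Type*} [Field F] [CommMonoidWithZero R]

theorem apply_div_sub_one (θ : MulChar F R) (w : F) :
    θ (w / (w - 1)) = θ (-1) * θ w * θ⁻¹ (1 - w) := by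
  rw [show w / (w - 1) = -1 * w * (1 - w)⁻¹ by
    rw [div_eq_mul_inv, ← neg_sub, inv_neg]; ring, map_mul, map_mul, inv_apply']

theorem one_apply_of_ne_zero {a : F} (ha : a ≠ 0) : (1 : MulChar F R) a = 1 :=
  one_apply ha.isUnit

theorem inv_apply_neg_one (χ : MulChar F R) : χ⁻¹ (-1) = χ (-1) := by
  rw [inv_apply', inv_neg_one]

end MulChar

open MulChar

section Field

variable {F : Type*} [Field F]

noncomputable def appellF2Summand (A B B' C C' : MulChar F ℂ) (x y u v : F) : ℂ :=
  B u * B' v * (B⁻¹ * C) (1 - u) * (B'⁻¹ * C') (1 - v) * A⁻¹ (1 - u * x - v * y)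

/- With `p = u (1 - t)` and `s = ut/(u - 1)`, the binomial weight `ε(s) D(1 - s)` turns
`B(u) D(1 - u)` into `B(p) D(1 - p)`, except at the pole `u = 1`: that term becomes the `₂F₁`. -/
theorem one_apply_mul_apply_mul_apply [DecidableEq F] (B D : MulChar F ℂ) {t : F} (ht : t ≠ 1)
    (u : F) :
    (1 : MulChar F ℂ) (u / (u - 1) * t) * D (1 - u / (u - 1) * t) * (B u * D (1 - u)) =
      (1 : MulChar F ℂ) t * B⁻¹ (1 - t) *
        (B (u * (1 - t)) * D (1 - u * (1 - t)) - if u = 1 then B (1 - t) * D t else 0) := by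
  have h1t : 1 - t ≠ 0 := sub_ne_zero.mpr (Ne.symm ht)
  by_cases hu0 : u = 0
  · simp [hu0]
  by_cases hu1 : u = 1
  · simp [hu1]
  by_cases ht0 : t = 0
  · simp [ht0]
  have hu1' : u - 1 ≠ 0 := sub_ne_zero.mpr hu1
  have hD : D (1 - u / (u - 1) * t) * D (1 - u) = D (1 - u * (1 - t)) := by
    rw [← map_mul]
    congr 1
    field_simp
    ring
  have hB : B (u * (1 - t)) * B⁻¹ (1 - t) = B u := by
    rw [inv_apply', ← map_mul]
    congr 1
    field_simp
  rw [one_apply_of_ne_zero (mul_ne_zero (div_ne_zero hu0 hu1') ht0), one_apply_of_ne_zero ht0,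
    if_neg hu1, ← hD, ← hB]
  ring

theorem one_apply_mul_inv_apply_mul_appellF2Summand [DecidableEq F] (A B B' C C' : MulChar F ℂ)
    (x y : F) {t : F} (ht : t ≠ 1) (u v : F) :
    (1 : MulChar F ℂ) (u / (u - 1) * t) * (B * C⁻¹)⁻¹ (1 - u / (u - 1) * t) *
        appellF2Summand A B B' C C' x y u v =
      (1 : MulChar F ℂ) t * B⁻¹ (1 - t) *
        (appellF2Summand A B B' C C' (x / (1 - t)) y (u * (1 - t)) v -
          if u = 1 then appellF2Summand A B B' C C' (x / (1 - t)) y (1 - t) v else 0) := by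
  have h1t : 1 - t ≠ 0 := sub_ne_zero.mpr (Ne.symm ht)
  have hux : u * (1 - t) * (x / (1 - t)) = u * x := by field_simp
  set R := B' v * (B'⁻¹ * C') (1 - v) * A⁻¹ (1 - u * x - v * y)
  calc _ = (1 : MulChar F ℂ) (u / (u - 1) * t) * (B⁻¹ * C) (1 - u / (u - 1) * t) *
        (B u * (B⁻¹ * C) (1 - u)) * R := by
        rw [mul_inv, inv_inv, appellF2Summand]; ring
    _ = (1 : MulChar F ℂ) t * B⁻¹ (1 - t) * (B (u * (1 - t)) * (B⁻¹ * C) (1 - u * (1 - t)) -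
        if u = 1 then B (1 - t) * (B⁻¹ * C) t else 0) * R := by
        rw [one_apply_mul_apply_mul_apply B _ ht]
    _ = _ := by
      split_ifs with hu
      · subst hu
        simp only [appellF2Summand, R, one_mul, sub_sub_cancel]
        ring
      · simp only [appellF2Summand, R, hux]
        ring

end Field

section FiniteField

variable {F : Type*} [Field F] [Fintype F]

theorem card_sub_one_eq_natCard_units : (Fintype.card F : ℂ) - 1 = Nat.card Fˣ := by
  classical
  rw [Nat.card_eq_fintype_card, Fintype.card_units, Nat.cast_sub Fintype.card_pos, Nat.cast_one]

theorem sum_binom_mul_apply (D : MulChar F ℂ) (s : F) :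
    ((Fintype.card F : ℂ) - 1)⁻¹ * ∑ θ : MulChar F ℂ, binom (D * θ) θ * θ s =
      (1 : MulChar F ℂ) s * D⁻¹ (1 - s) := by
  classical
  have hterm (θ : MulChar F ℂ) : binom (D * θ) θ * θ s = ∑ w, D w * θ (w / (w - 1) * s) := by
    simp only [binom, mul_sum, sum_mul, map_mul, apply_div_sub_one, mul_apply]
    exact sum_congr rfl fun w _ ↦ by ring
  have hN : (Nat.card Fˣ : ℂ) ≠ 0 := Nat.cast_ne_zero.mpr Nat.card_pos.ne'
  simp only [hterm, sum_comm (γ := MulChar F ℂ), ← mul_sum, sum_apply_eq_ite,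
    card_sub_one_eq_natCard_units]
  by_cases hs0 : s = 0
  · simp [hs0]
  simp only [div_sub_one_mul_eq_one_iff hs0, one_apply_of_ne_zero hs0, one_mul, mul_ite, mul_zero]
  by_cases hs1 : s = 1
  · simp [hs1]
  simp only [mul_eq_one_iff_eq_inv₀ (sub_ne_zero.mpr (Ne.symm hs1)), sum_ite_eq', mem_univ,
    if_true, inv_apply']
  field_simp

variable (A B B' C C' : MulChar F ℂ) (x y : F)

theorem appellF2_eq_sum_appellF2Summand : appellF2 A B B' C C' x y =
    (1 : MulChar F ℂ) (x * y) * (B * B' * C * C') (-1) *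
      ∑ u, ∑ v, appellF2Summand A B B' C C' x y u v :=
  rfl

theorem appellF2_mul_left (θ : MulChar F ℂ) : appellF2 A (B * θ) B' C C' x y =
    (1 : MulChar F ℂ) (x * y) * (B * B' * C * C') (-1) *
      ∑ u, ∑ v, θ (u / (u - 1)) * appellF2Summand A B B' C C' x y u v := by
  simp only [appellF2, appellF2Summand, mul_sum, apply_div_sub_one, mul_apply, mul_inv]
  refine sum_congr rfl fun u _ ↦ sum_congr rfl fun v _ ↦ ?_
  ring

theorem sum_binom_mul_appellF2_mul_left (D : MulChar F ℂ) (t : F) :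
    ((Fintype.card F : ℂ) - 1)⁻¹ *
        ∑ θ : MulChar F ℂ, binom (D * θ) θ * appellF2 A (B * θ) B' C C' x y * θ t =
      (1 : MulChar F ℂ) (x * y) * (B * B' * C * C') (-1) *
        ∑ u, ∑ v, (1 : MulChar F ℂ) (u / (u - 1) * t) * D⁻¹ (1 - u / (u - 1) * t) *
          appellF2Summand A B B' C C' x y u v := by
  simp only [← sum_binom_mul_apply]
  simp only [appellF2_mul_left, mul_sum, sum_mul]
  rw [sum_comm]
  refine sum_congr rfl fun u _ ↦ ?_
  rw [sum_comm]
  exact sum_congr rfl fun v _ ↦ sum_congr rfl fun θ _ ↦ by rw [map_mul θ]; ring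

theorem inv_apply_one_sub_mul_gauss2F1 (A B C : MulChar F ℂ) {x : F} (hx : x ≠ 1) (y : F) :
    A⁻¹ (1 - x) * gauss2F1 A B C (y / (1 - x)) =
      (1 : MulChar F ℂ) y * (B * C) (-1) * ∑ v, B v * (B⁻¹ * C) (1 - v) * A⁻¹ (1 - x - v * y) := by
  have h1x : 1 - x ≠ 0 := sub_ne_zero.mpr (Ne.symm hx)
  have hA (v : F) : A⁻¹ (1 - x) * A⁻¹ (1 - y / (1 - x) * v) = A⁻¹ (1 - x - v * y) := by
    rw [← map_mul]
    congr 1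
    field_simp
  rw [gauss2F1, div_eq_mul_inv y, map_mul (1 : MulChar F ℂ) y,
    one_apply_of_ne_zero (inv_ne_zero h1x), mul_one, ← div_eq_mul_inv]
  simp only [mul_sum]
  exact sum_congr rfl fun v _ ↦ by rw [← hA]; ring

theorem appellF2_div_eq_sum_mul {c : F} (hc : c ≠ 0) : appellF2 A B B' C C' (x / c) y =
    (1 : MulChar F ℂ) (x * y) * (B * B' * C * C') (-1) *
      ∑ u, ∑ v, appellF2Summand A B B' C C' (x / c) y (u * c) v := by
  rw [appellF2_eq_sum_appellF2Summand, div_mul_eq_mul_div, div_eq_mul_inv,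
    map_mul (1 : MulChar F ℂ), one_apply_of_ne_zero (inv_ne_zero hc), mul_one]
  exact congrArg _ (Fintype.sum_bijective _ (mulRight_bijective₀ _ hc) _ _ fun _ ↦ rfl).symm

theorem sum_appellF2Summand_one_sub_eq_gauss2F1 {t : F} (hx : x ≠ 1) (ht : t ≠ 1) :
    (1 : MulChar F ℂ) (x * y) * (B * B' * C * C') (-1) *
        ((1 : MulChar F ℂ) t * B⁻¹ (1 - t) *
          ∑ v, appellF2Summand A B B' C C' (x / (1 - t)) y (1 - t) v) =
      (B⁻¹ * C) (-t) * (1 : MulChar F ℂ) x * A⁻¹ (1 - x) * gauss2F1 A B' C' (y / (1 - x)) := by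
  have h1t : 1 - t ≠ 0 := sub_ne_zero.mpr (Ne.symm ht)
  have hS (v : F) : appellF2Summand A B B' C C' (x / (1 - t)) y (1 - t) v =
      B (1 - t) * (B⁻¹ * C) t * (B' v * (B'⁻¹ * C') (1 - v) * A⁻¹ (1 - x - v * y)) := by
    simp only [appellF2Summand, sub_sub_cancel, mul_div_cancel₀ x h1t]
    ring
  have hB : B⁻¹ (1 - t) * B (1 - t) = 1 := by
    rw [← mul_apply, inv_mul_cancel, one_apply_of_ne_zero h1t]
  have hεt : (1 : MulChar F ℂ) t * (B⁻¹ * C) t = (B⁻¹ * C) t := by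
    rw [← mul_apply, one_mul]
  have hneg : (B * B' * C * C') (-1) * (B⁻¹ * C) t = (B⁻¹ * C) (-t) * (B' * C') (-1) := by
    rw [neg_eq_neg_one_mul t]
    simp only [mul_apply, map_mul, inv_apply_neg_one]
    ring
  rw [mul_assoc _ (A⁻¹ (1 - x)), inv_apply_one_sub_mul_gauss2F1 A B' C' hx, map_mul]
  simp only [hS, ← mul_sum]
  set G := ∑ v, B' v * (B'⁻¹ * C') (1 - v) * A⁻¹ (1 - x - v * y)
  calc _ = (1 : MulChar F ℂ) x * (1 : MulChar F ℂ) y * (B⁻¹ (1 - t) * B (1 - t)) *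
        ((B * B' * C * C') (-1) * ((1 : MulChar F ℂ) t * (B⁻¹ * C) t)) * G := by ring
    _ = _ := by rw [hB, hεt, hneg]; ring

end FiniteField

/-- a generating function for F₂ in the parameter `B`. -/
theorem appellF2_generating_B {F : Type*} [Field F] [Fintype F]
    (A B B' C C' : MulChar F ℂ) (x y t : F) (hx : x ≠ 1) (ht : t ≠ 1) :
    ((Fintype.card F : ℂ) - 1)⁻¹ *
        ∑ θ : MulChar F ℂ,
          binom (B * C⁻¹ * θ) θ * appellF2 A (B * θ) B' C C' x y * θ t =
      (1 : MulChar F ℂ) t * B⁻¹ (1 - t) * appellF2 A B B' C C' (x / (1 - t)) y -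
      (B⁻¹ * C) (-t) * (1 : MulChar F ℂ) x * A⁻¹ (1 - x) *
        gauss2F1 A B' C' (y / (1 - x)) := by
  classical
  have hpole (f : F → ℂ) : ∑ u : F, ∑ v, (if u = 1 then f v else 0) = ∑ v, f v := by
    rw [sum_comm]
    simp
  rw [sum_binom_mul_appellF2_mul_left,
    appellF2_div_eq_sum_mul A B B' C C' x y (sub_ne_zero.mpr (Ne.symm ht)),
    ← sum_appellF2Summand_one_sub_eq_gauss2F1 A B B' C C' x y hx ht]
  simp only [one_apply_mul_inv_apply_mul_appellF2Summand A B B' C C' x y ht, mul_sub,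
    sum_sub_distrib, ← mul_sum, hpole]
  ring
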